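/- arXiv:1912.08378 — 3 statements merged into one kernel-verified Lean document; each statement's English description precedes it below -/
import Mathlib

section
/- Let c, D > 0, let δ > 0, and let G be a finite Borel measure on [0,∞) with G((δ,∞)) = 0 (bounded spectral support). Then for every t ≥ 0 and every γ ∈ [0,π], 2·∫_{[0,δ]} (1 − sinc(2μ·sin(γ/2)))·H̃(μ,t)²·G(dμ) ≤ (2δ²/3)·G([0,∞))·(1 − cos γ). (The left-hand side equals the mean-square error E|T_H(x,t) − T_H(x',t)|² of the spherical hyperbolic diffusion field at two points of S² at angular distance γ, so this error is of order 1 − cos γ as γ → 0⁺ even without any decay assumption on the angular power spectrum.) -/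
open MeasureTheory Real Set

/-- `H̃₁(μ,t)` for the subcritical regime `0 ≤ μ < c/(2D)`. -/
noncomputable def Htilde1 (c D μ t : ℝ) : ℝ :=
  Real.exp (-(c ^ 2 * t) / (2 * D)) *
    (Real.cosh (c * t * Real.sqrt (c ^ 2 / (4 * D ^ 2) - μ ^ 2)) +
      c / (2 * D * Real.sqrt (c ^ 2 / (4 * D ^ 2) - μ ^ 2)) *
        Real.sinh (c * t * Real.sqrt (c ^ 2 / (4 * D ^ 2) - μ ^ 2)))

/-- `H̃₂(μ,t)` for the supercritical regime `μ > c/(2D)`. -/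
noncomputable def Htilde2 (c D μ t : ℝ) : ℝ :=
  Real.exp (-(c ^ 2 * t) / (2 * D)) *
    (Real.cos (c * t * Real.sqrt (μ ^ 2 - c ^ 2 / (4 * D ^ 2))) +
      c / (2 * D * Real.sqrt (μ ^ 2 - c ^ 2 / (4 * D ^ 2))) *
        Real.sin (c * t * Real.sqrt (μ ^ 2 - c ^ 2 / (4 * D ^ 2))))

/-- `H̃(μ,t)`, pieced together from `H̃₁`, the value at `μ = c/(2D)`, and `H̃₂`. -/
noncomputable def Htilde (c D μ t : ℝ) : ℝ :=
  if μ < c / (2 * D) then Htilde1 c D μ t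
  else if μ = c / (2 * D) then Real.exp (-(c ^ 2 * t) / (2 * D)) * (1 + c ^ 2 * t / (2 * D))
  else Htilde2 c D μ t

/-- `sinc x = sin x / x` for `x ≠ 0`, `sinc 0 = 1`. -/
noncomputable def sinc (x : ℝ) : ℝ := if x = 0 then 1 else Real.sin x / x

/-!
Pointwise, `1 - sinc x ≤ x² / 6` and `|H̃(μ,t)| ≤ 1`; with `x = 2μ sin(γ/2)` one has
`x² / 6 = μ² (1 - cos γ) / 3 ≤ δ² (1 - cos γ) / 3` on `[0,δ]`, and integrating against `G`
gives the bound. For `|H̃| ≤ 1` write `r = c/(2D)`, `τ = ct`: then `H̃ = e^{-rτ} F` where `F` is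
`cosh(sτ) + (r/s) sinh(sτ)` with `0 < s ≤ r`, or `1 + rτ`, or `cos(sτ) + (r/s) sin(sτ)`. The
first is at most `e^{rτ}` because `sinh u ≤ u eᵘ`, the other two are at most `1 + rτ ≤ e^{rτ}`
in absolute value.
-/

lemma Real.sinh_le_mul_exp (u : ℝ) : sinh u ≤ u * exp u := by
  have hexp : exp u * (1 - 2 * u) ≤ exp (-u) := by
    calc exp u * (1 - 2 * u) ≤ exp u * exp (-2 * u) := by
          gcongr; linarith [add_one_le_exp (-2 * u)]
      _ = exp (-u) := by rw [← exp_add]; ring_nf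
  rw [sinh_eq]
  linarith

lemma Real.cosh_add_mul_sinh_le_exp_mul {k : ℝ} (hk : 1 ≤ k) (u : ℝ) :
    cosh u + k * sinh u ≤ exp (k * u) := by
  have hsinh : (k - 1) * sinh u ≤ (k - 1) * u * exp u := by
    rw [mul_assoc]; exact mul_le_mul_of_nonneg_left (sinh_le_mul_exp u) (by linarith)
  calc cosh u + k * sinh u = exp u + (k - 1) * sinh u := by rw [← cosh_add_sinh]; ring
    _ ≤ exp u * (1 + (k - 1) * u) := by linarith
    _ ≤ exp u * exp ((k - 1) * u) := by gcongr; linarith [add_one_le_exp ((k - 1) * u)]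
    _ = exp (k * u) := by rw [← exp_add]; ring_nf

lemma Real.abs_cos_add_mul_sin_le {k : ℝ} (hk : 0 ≤ k) (u : ℝ) :
    |cos u + k * sin u| ≤ 1 + k * |u| := by
  calc |cos u + k * sin u| ≤ |cos u| + k * |sin u| := by
        simpa [abs_mul, abs_of_nonneg hk] using abs_add_le (cos u) (k * sin u)
    _ ≤ 1 + k * |u| := add_le_add (abs_cos_le_one u) (mul_le_mul_of_nonneg_left abs_sin_le_abs hk)

lemma Real.exp_neg_mul_one_add_le_one (x : ℝ) : exp (-x) * (1 + x) ≤ 1 := by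
  calc exp (-x) * (1 + x) ≤ exp (-x) * exp x := by gcongr; linarith [add_one_le_exp x]
    _ = 1 := by rw [← exp_add, neg_add_cancel, exp_zero]

lemma Real.one_sub_sinc_le_sq_div_six (x : ℝ) : 1 - Real.sinc x ≤ x ^ 2 / 6 := by
  wlog hx : 0 < x generalizing x
  · rcases (not_lt.1 hx).lt_or_eq with hneg | rfl
    · simpa [sinc_neg] using this (-x) (neg_pos.2 hneg)
    · simp
  rw [sinc_of_ne_zero hx.ne', sub_le_comm, le_div_iff₀ hx]
  linarith [sin_ge_sub_cube hx.le]

section DampedOscillator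

variable {r s τ : ℝ}

lemma abs_exp_neg_mul_cosh_add_le_one (hs : 0 < s) (hsr : s ≤ r) (hτ : 0 ≤ τ) :
    |exp (-(r * τ)) * (cosh (τ * s) + r / s * sinh (τ * s))| ≤ 1 := by
  have hk : 1 ≤ r / s := (one_le_div hs).2 hsr
  have hnonneg : 0 ≤ cosh (τ * s) + r / s * sinh (τ * s) := by
    have := sinh_nonneg_iff.2 (mul_nonneg hτ hs.le)
    positivity
  rw [abs_of_nonneg (by positivity)]
  calc exp (-(r * τ)) * (cosh (τ * s) + r / s * sinh (τ * s))
      ≤ exp (-(r * τ)) * exp (r / s * (τ * s)) := by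
        gcongr; exact cosh_add_mul_sinh_le_exp_mul hk _
    _ = 1 := by
        rw [← exp_add, show -(r * τ) + r / s * (τ * s) = 0 by field_simp; ring, exp_zero]

lemma abs_exp_neg_mul_cos_add_le_one (hr : 0 ≤ r) (hs : 0 < s) (hτ : 0 ≤ τ) :
    |exp (-(r * τ)) * (cos (τ * s) + r / s * sin (τ * s))| ≤ 1 := by
  have hk : 0 ≤ r / s := div_nonneg hr hs.le
  rw [abs_mul, abs_of_pos (exp_pos _)]
  calc exp (-(r * τ)) * |cos (τ * s) + r / s * sin (τ * s)|
      ≤ exp (-(r * τ)) * (1 + r * τ) := by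
        gcongr
        calc |cos (τ * s) + r / s * sin (τ * s)| ≤ 1 + r / s * |τ * s| :=
              abs_cos_add_mul_sin_le hk _
          _ = 1 + r * τ := by rw [abs_of_nonneg (by positivity)]; field_simp
    _ ≤ 1 := exp_neg_mul_one_add_le_one _

end DampedOscillator

lemma abs_Htilde_le_one {c D μ t : ℝ} (hc : 0 < c) (hD : 0 < D) (hμ : 0 ≤ μ) (ht : 0 ≤ t) :
    |Htilde c D μ t| ≤ 1 := by
  unfold Htilde Htilde1 Htilde2
  set r := c / (2 * D)
  have hr : 0 < r := by positivity
  have hτ : 0 ≤ c * t := by positivity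
  have hdamp : -(c ^ 2 * t) / (2 * D) = -(r * (c * t)) := by ring
  have hr_sq : c ^ 2 / (4 * D ^ 2) = r ^ 2 := by ring
  have hcoef (x : ℝ) : c / (2 * D * x) = r / x := (div_div _ _ _).symm
  simp only [hdamp, hr_sq, hcoef]
  split_ifs with hsub hcrit
  · have hs : 0 < √(r ^ 2 - μ ^ 2) := sqrt_pos.2 (by nlinarith)
    have hsr : √(r ^ 2 - μ ^ 2) ≤ r := by
      rw [sqrt_le_left hr.le]; nlinarith
    exact abs_exp_neg_mul_cosh_add_le_one hs hsr hτ
  · rw [abs_of_nonneg (by positivity), show c ^ 2 * t / (2 * D) = r * (c * t) by ring]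
    exact exp_neg_mul_one_add_le_one _
  · have hsup : r < μ := lt_of_le_of_ne (not_lt.1 hsub) (Ne.symm hcrit)
    exact abs_exp_neg_mul_cos_add_le_one hr.le (sqrt_pos.2 (by nlinarith)) hτ

lemma abs_one_sub_sinc_mul_sq_le (x : ℝ) {h : ℝ} (hh : |h| ≤ 1) :
    |(1 - _root_.sinc x) * h ^ 2| ≤ x ^ 2 / 6 := by
  have hsinc : 0 ≤ 1 - Real.sinc x := sub_nonneg.2 (sinc_le_one x)
  have hsq : h ^ 2 ≤ 1 := by rw [← sq_abs]; exact pow_le_one₀ (abs_nonneg h) hh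
  change |(1 - Real.sinc x) * h ^ 2| ≤ _
  rw [abs_of_nonneg (mul_nonneg hsinc (sq_nonneg h))]
  calc (1 - Real.sinc x) * h ^ 2 ≤ (1 - Real.sinc x) * 1 := by gcongr
    _ ≤ x ^ 2 / 6 := by rw [mul_one]; exact one_sub_sinc_le_sq_div_six x

theorem mse_bounded_support_general
    (c D δ : ℝ) (hc : 0 < c) (hD : 0 < D)
    (G : MeasureTheory.Measure ℝ) [MeasureTheory.IsFiniteMeasure G] :
    ∀ t : ℝ, 0 ≤ t → ∀ γ : ℝ, γ ∈ Set.Icc 0 Real.pi →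
      2 * ∫ μ in Set.Icc (0 : ℝ) δ,
          (1 - _root_.sinc (2 * μ * Real.sin (γ / 2))) * Htilde c D μ t ^ 2 ∂G
        ≤ (2 * δ ^ 2 / 3) * (G (Set.Ici 0)).toReal * (1 - Real.cos γ) := by
  intro t ht γ _
  have hcos : 0 ≤ 1 - cos γ := sub_nonneg.2 (cos_le_one γ)
  have hbound : ∀ μ ∈ Icc (0 : ℝ) δ,
      ‖(1 - _root_.sinc (2 * μ * sin (γ / 2))) * Htilde c D μ t ^ 2‖
        ≤ δ ^ 2 * (1 - cos γ) / 3 := by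
    rintro μ ⟨hμ, hμδ⟩
    calc _ ≤ (2 * μ * sin (γ / 2)) ^ 2 / 6 :=
          abs_one_sub_sinc_mul_sq_le _ (abs_Htilde_le_one hc hD hμ ht)
      _ = μ ^ 2 * (1 - cos γ) / 3 := by
          rw [mul_pow, sin_sq_eq_half_sub, mul_div_cancel₀ _ two_ne_zero]; ring
      _ ≤ δ ^ 2 * (1 - cos γ) / 3 := by gcongr
  have hint :=
    (le_abs_self _).trans (norm_setIntegral_le_of_norm_le_const (measure_lt_top G _) hbound)
  have hmass : G.real (Icc 0 δ) ≤ G.real (Ici 0) := measureReal_mono Icc_subset_Ici_self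
  calc _ ≤ 2 * (δ ^ 2 * (1 - cos γ) / 3 * G.real (Icc 0 δ)) := by gcongr
    _ ≤ 2 * (δ ^ 2 * (1 - cos γ) / 3 * G.real (Ici 0)) := by gcongr
    _ = _ := by rw [measureReal_def]; ring

/-- If the spectral measure `G` has bounded support `[0,δ]`
(`G((δ,∞)) = 0`), then the mean-square error
`2 ∫_{[0,δ]} (1 − sinc(2μ sin(γ/2))) H̃(μ,t)² G(dμ)` of the spherical hyperbolic
diffusion field between points at angular distance `γ` is bounded by
`(2δ²/3)·G([0,∞))·(1 − cos γ)`. -/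
theorem mse_bounded_support
    (c D δ : ℝ) (hc : 0 < c) (hD : 0 < D) (hδ : 0 < δ)
    (G : MeasureTheory.Measure ℝ) [MeasureTheory.IsFiniteMeasure G]
    (hG0 : G (Set.Iio 0) = 0) (hsupp : G (Set.Ioi δ) = 0) :
    ∀ t : ℝ, 0 ≤ t → ∀ γ : ℝ, γ ∈ Set.Icc 0 Real.pi →
      2 * ∫ μ in Set.Icc (0 : ℝ) δ,
          (1 - _root_.sinc (2 * μ * Real.sin (γ / 2))) * Htilde c D μ t ^ 2 ∂G
        ≤ (2 * δ ^ 2 / 3) * (G (Set.Ici 0)).toReal * (1 - Real.cos γ) :=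
  mse_bounded_support_general c D δ hc hD G
end

section
/- Let c, D > 0. For every constant A > 0 and every L ∈ ℕ there exist t > 0 and a nonzero finite Borel measure G on [0,∞) such that 0 < Σ_{l=L}^∞ (2l+1)·C_l < ∞ and (Σ_{l=L}^∞ (2l+1)·C_l(t,t))^{1/2} > A·exp(−c²t/(2D))·(Σ_{l=L}^∞ (2l+1)·C_l)^{1/2}. Consequently, no truncation error bound of the form ‖T_H(·,t) − T_{H,L}(·,t)‖_{L²(Ω×S²)} ≤ A·exp(−c²t/(2D))·(Σ_{l=L}^∞(2l+1)C_l)^{1/2} can hold uniformly over initial spectral measures G. -/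
open MeasureTheory Real Set

/-- Bessel function of the first kind of real order `ν`, via its power series
(with real powers; for `ν > 0` this gives `besselJ ν 0 = 0`). -/
noncomputable def besselJ (ν x : ℝ) : ℝ :=
  ∑' n : ℕ, ((-1 : ℝ) ^ n / (n.factorial * Real.Gamma ((n : ℝ) + ν + 1))) *
    (x / 2) ^ (2 * (n : ℝ) + ν)

/-- The integrand `J_{l+1/2}(μ)² / μ`, with its value at `μ = 0` defined by
continuous extension (`2/π` for `l = 0`, `0` for `l ≥ 1`). -/
noncomputable def besselInt (l : ℕ) (μ : ℝ) : ℝ :=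
  if μ = 0 then (if l = 0 then 2 / Real.pi else 0)
  else besselJ ((l : ℝ) + 1 / 2) μ ^ 2 / μ

/-- Angular power spectrum `C_l(t,t')` of the spherical hyperbolic diffusion field. -/
noncomputable def Cl (c D : ℝ) (G : MeasureTheory.Measure ℝ) (l : ℕ) (t t' : ℝ) : ℝ :=
  2 * Real.pi ^ 2 * ∫ μ in Set.Ici (0 : ℝ), besselInt l μ * Htilde c D μ t * Htilde c D μ t' ∂G

/-! Take `G` to be the Dirac mass at a small subcritical frequency `μ₀`. Then
`C_l(t,t) = H̃(μ₀,t)² C_l` for every `l`, so the two square roots differ by the factor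
`H̃(μ₀,t) ≥ exp(−c²t/(2D)) cosh(ctβ)` with `β = √(c²/(4D²) − μ₀²) > 0`, and the cosh eventually
exceeds any `A`. Finiteness and positivity of `Σ_{l≥L} (2l+1) C_l` come from comparing
`J_ν(μ)` with the leading term `(μ/2)^ν / Γ(ν+1)` of its series for `μ ≤ 1`, which makes
`J_{l+1/2}(μ₀)²/μ₀` decay like `4^{-l}`. -/

theorem Real.Gamma_le_Gamma_add_natCast {x : ℝ} (hx : 1 ≤ x) (n : ℕ) :
    Gamma x ≤ Gamma (x + n) := by
  induction n with
  | zero => simp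
  | succ n ih =>
    have hpos : 0 < x + n := by positivity
    calc Gamma x ≤ Gamma (x + n) := ih
      _ ≤ (x + n) * Gamma (x + n) :=
        le_mul_of_one_le_left (Gamma_pos_of_pos hpos).le (by linarith [n.cast_nonneg (α := ℝ)])
      _ = Gamma (x + ↑(n + 1)) := by
        rw [Nat.cast_succ, ← add_assoc, Gamma_add_one hpos.ne']

noncomputable def besselJTerm (ν x : ℝ) (n : ℕ) : ℝ :=
  ((-1 : ℝ) ^ n / (n.factorial * Gamma ((n : ℝ) + ν + 1))) * (x / 2) ^ (2 * (n : ℝ) + ν)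

theorem besselJ_eq_tsum_besselJTerm (ν x : ℝ) : besselJ ν x = ∑' n, besselJTerm ν x n := rfl

theorem besselJTerm_zero (ν x : ℝ) : besselJTerm ν x 0 = (x / 2) ^ ν / Gamma (ν + 1) := by
  simp [besselJTerm, add_comm, div_eq_inv_mul]

section BesselSeries

variable {ν x : ℝ}

theorem besselJTerm_zero_pos (hν : 0 ≤ ν) (hx : 0 < x) : 0 < besselJTerm ν x 0 := by
  rw [besselJTerm_zero]
  exact div_pos (rpow_pos_of_pos (half_pos hx) ν) (Gamma_pos_of_pos (by linarith))

theorem abs_besselJTerm_le (hν : 0 ≤ ν) (hx : 0 < x) (n : ℕ) :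
    |besselJTerm ν x n| ≤ besselJTerm ν x 0 * ((x / 2) ^ 2) ^ n := by
  have hx2 : 0 < x / 2 := half_pos hx
  have hΓ : Gamma (ν + 1) ≤ Gamma ((n : ℝ) + ν + 1) := by
    convert Gamma_le_Gamma_add_natCast (x := ν + 1) (by linarith) n using 2
    ring
  have hΓpos : 0 < Gamma (ν + 1) := Gamma_pos_of_pos (by linarith)
  have hpow : (x / 2) ^ (2 * (n : ℝ) + ν) = ((x / 2) ^ 2) ^ n * (x / 2) ^ ν := by
    rw [rpow_add hx2, ← pow_mul, ← rpow_natCast]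
    push_cast
    ring_nf
  have hfact : (1 : ℝ) ≤ n.factorial := Nat.one_le_cast.2 n.factorial_pos
  rw [besselJTerm_zero, besselJTerm, abs_mul, abs_div, abs_pow, abs_neg, abs_one, one_pow,
    abs_of_pos (by positivity), abs_of_pos (rpow_pos_of_pos hx2 _), hpow]
  calc 1 / (n.factorial * Gamma ((n : ℝ) + ν + 1)) * (((x / 2) ^ 2) ^ n * (x / 2) ^ ν)
      = ((x / 2) ^ 2) ^ n * (x / 2) ^ ν / (n.factorial * Gamma ((n : ℝ) + ν + 1)) := by ring
    _ ≤ ((x / 2) ^ 2) ^ n * (x / 2) ^ ν / Gamma (ν + 1) := by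
      gcongr
      nlinarith
    _ = (x / 2) ^ ν / Gamma (ν + 1) * ((x / 2) ^ 2) ^ n := by ring

theorem summable_besselJTerm (hν : 0 ≤ ν) (hx0 : 0 < x) (hx2 : x < 2) :
    Summable (besselJTerm ν x) := by
  have hr : (x / 2) ^ 2 < 1 := by nlinarith
  refine Summable.of_norm_bounded ((summable_geometric_of_lt_one (by positivity) hr).mul_left
    (besselJTerm ν x 0)) fun n => ?_
  exact abs_besselJTerm_le hν hx0 n

theorem abs_besselJ_sub_besselJTerm_zero_le (hν : 0 ≤ ν) (hx0 : 0 < x) (hx2 : x < 2) :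
    |besselJ ν x - besselJTerm ν x 0| ≤
      besselJTerm ν x 0 * ((x / 2) ^ 2 / (1 - (x / 2) ^ 2)) := by
  have hr1 : (x / 2) ^ 2 < 1 := by nlinarith
  set r := (x / 2) ^ 2
  have hr0 : 0 ≤ r := by positivity
  have hgeom : Summable fun n : ℕ => besselJTerm ν x 0 * r ^ (n + 1) :=
    ((summable_geometric_of_lt_one hr0 hr1).mul_left (besselJTerm ν x 0 * r)).congr
      fun n => by ring
  rw [besselJ_eq_tsum_besselJTerm, (summable_besselJTerm hν hx0 hx2).tsum_eq_zero_add,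
    add_sub_cancel_left]
  calc |∑' n, besselJTerm ν x (n + 1)|
      ≤ ∑' n : ℕ, besselJTerm ν x 0 * r ^ (n + 1) := by
        simpa only [Real.norm_eq_abs] using tsum_of_norm_bounded hgeom.hasSum fun n =>
          (Real.norm_eq_abs _).trans_le (abs_besselJTerm_le hν hx0 (n + 1))
    _ = besselJTerm ν x 0 * (r / (1 - r)) := by
      simp_rw [pow_succ, ← mul_assoc]
      rw [tsum_mul_right, tsum_mul_left, tsum_geometric_of_lt_one hr0 hr1]
      ring

theorem besselJ_mem_Icc (hν : 0 ≤ ν) (hx0 : 0 < x) (hx1 : x ≤ 1) :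
    besselJ ν x ∈ Icc (2 / 3 * besselJTerm ν x 0) (4 / 3 * besselJTerm ν x 0) := by
  have hr : (x / 2) ^ 2 / (1 - (x / 2) ^ 2) ≤ 1 / 3 := by
    rw [div_le_iff₀ (by nlinarith)]
    nlinarith
  have h := (abs_besselJ_sub_besselJTerm_zero_le hν hx0 (by linarith)).trans
    (mul_le_mul_of_nonneg_left hr (besselJTerm_zero_pos hν hx0).le)
  constructor <;> linarith [abs_le.1 h]

end BesselSeries

section BesselIntegrand

variable {μ : ℝ}

theorem besselInt_pos (hμ0 : 0 < μ) (hμ1 : μ ≤ 1) (l : ℕ) : 0 < besselInt l μ := by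
  rw [besselInt, if_neg hμ0.ne']
  have hJ := (besselJ_mem_Icc (ν := l + 1 / 2) (by positivity) hμ0 hμ1).1
  have h0 := besselJTerm_zero_pos (ν := l + 1 / 2) (by positivity) hμ0
  have : 0 < besselJ (l + 1 / 2) μ := by linarith
  positivity

theorem besselJTerm_zero_le_of_le_one (hμ0 : 0 < μ) (hμ1 : μ ≤ 1) (l : ℕ) :
    besselJTerm (l + 1 / 2) μ 0 ≤ (1 / 2) ^ l / Gamma (3 / 2) := by
  have hμ2 : 0 < μ / 2 := half_pos hμ0
  have hnum : (μ / 2) ^ ((l : ℝ) + 1 / 2) ≤ (1 / 2) ^ l :=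
    calc (μ / 2) ^ ((l : ℝ) + 1 / 2) ≤ (μ / 2) ^ (l : ℝ) :=
          rpow_le_rpow_of_exponent_ge hμ2 (by linarith) (by linarith)
      _ = (μ / 2) ^ l := rpow_natCast _ l
      _ ≤ (1 / 2) ^ l := by gcongr
  have hden : Gamma (3 / 2) ≤ Gamma ((l : ℝ) + 1 / 2 + 1) := by
    convert Gamma_le_Gamma_add_natCast (x := 3 / 2) (by norm_num) l using 2
    ring
  rw [besselJTerm_zero]
  exact div_le_div₀ (by positivity) hnum (Gamma_pos_of_pos (by norm_num)) hden

theorem besselInt_le (hμ0 : 0 < μ) (hμ1 : μ ≤ 1) (l : ℕ) :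
    besselInt l μ ≤ (4 / (3 * Gamma (3 / 2))) ^ 2 / μ * (1 / 4) ^ l := by
  have hΓ : 0 < Gamma (3 / 2) := Gamma_pos_of_pos (by norm_num)
  obtain ⟨hlow, hup⟩ := besselJ_mem_Icc (ν := l + 1 / 2) (by positivity) hμ0 hμ1
  have h0 := besselJTerm_zero_pos (ν := l + 1 / 2) (by positivity) hμ0
  have hJ : besselJ (l + 1 / 2) μ ≤ 4 / (3 * Gamma (3 / 2)) * (1 / 2) ^ l := by
    calc besselJ (l + 1 / 2) μ ≤ 4 / 3 * besselJTerm (l + 1 / 2) μ 0 := hup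
      _ ≤ 4 / 3 * ((1 / 2) ^ l / Gamma (3 / 2)) := by
        gcongr
        exact besselJTerm_zero_le_of_le_one hμ0 hμ1 l
      _ = 4 / (3 * Gamma (3 / 2)) * (1 / 2) ^ l := by field_simp
  rw [besselInt, if_neg hμ0.ne']
  calc besselJ (l + 1 / 2) μ ^ 2 / μ ≤ (4 / (3 * Gamma (3 / 2)) * (1 / 2) ^ l) ^ 2 / μ := by
        gcongr
        linarith
    _ = (4 / (3 * Gamma (3 / 2))) ^ 2 / μ * (1 / 4) ^ l := by
        rw [mul_pow, ← pow_mul, mul_comm l, pow_mul]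
        norm_num
        ring

theorem summable_two_mul_add_one_mul_besselInt (hμ0 : 0 < μ) (hμ1 : μ ≤ 1) :
    Summable fun l : ℕ => (2 * (l : ℝ) + 1) * besselInt l μ := by
  have hq : ‖(1 / 4 : ℝ)‖ < 1 := by norm_num
  have hgeom : Summable fun l : ℕ => (2 * (l : ℝ) + 1) * (1 / 4) ^ l := by
    simpa [add_mul, mul_assoc] using
      ((summable_pow_mul_geometric_of_norm_lt_one 1 hq).mul_left 2).add
        (summable_geometric_of_lt_one (by norm_num) (by norm_num : (1 / 4 : ℝ) < 1))
  refine Summable.of_nonneg_of_le (fun l => by have := besselInt_pos hμ0 hμ1 l; positivity)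
    (fun l => ?_) (hgeom.mul_left ((4 / (3 * Gamma (3 / 2))) ^ 2 / μ))
  calc (2 * (l : ℝ) + 1) * besselInt l μ
      ≤ (2 * (l : ℝ) + 1) * ((4 / (3 * Gamma (3 / 2))) ^ 2 / μ * (1 / 4) ^ l) := by
        gcongr
        exact besselInt_le hμ0 hμ1 l
    _ = _ := by ring

end BesselIntegrand

section HyperbolicFactor

variable {c D μ : ℝ}

@[simp]
theorem Htilde_zero : Htilde c D μ 0 = 1 := by
  unfold Htilde Htilde1 Htilde2
  split_ifs <;> simp

theorem exp_mul_cosh_le_Htilde (hc : 0 ≤ c) (hD : 0 ≤ D) (hμ : μ < c / (2 * D)) {t : ℝ}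
    (ht : 0 ≤ t) :
    exp (-(c ^ 2 * t) / (2 * D)) * cosh (c * t * √(c ^ 2 / (4 * D ^ 2) - μ ^ 2)) ≤
      Htilde c D μ t := by
  rw [Htilde, if_pos hμ, Htilde1]
  have hsinh : 0 ≤ sinh (c * t * √(c ^ 2 / (4 * D ^ 2) - μ ^ 2)) :=
    sinh_nonneg_iff.2 (by positivity)
  gcongr
  exact le_add_of_nonneg_right (by positivity)

theorem eventually_mul_exp_lt_Htilde (hc : 0 < c) (hD : 0 < D) (hμ0 : 0 ≤ μ)
    (hμ : μ < c / (2 * D)) (A : ℝ) :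
    ∀ᶠ t in Filter.atTop, A * exp (-(c ^ 2 * t) / (2 * D)) < Htilde c D μ t := by
  set β := √(c ^ 2 / (4 * D ^ 2) - μ ^ 2)
  have hβ : 0 < β := by
    have : μ ^ 2 < c ^ 2 / (4 * D ^ 2) :=
      calc μ ^ 2 < (c / (2 * D)) ^ 2 := by gcongr
        _ = c ^ 2 / (4 * D ^ 2) := by ring
    exact sqrt_pos.2 (sub_pos.2 this)
  -- `cosh y ≥ (y + 1) / 2`, which exceeds `A` once `t ≥ 2A / (cβ)`
  filter_upwards [Filter.eventually_ge_atTop (max 0 (2 * A / (c * β)))] with t ht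
  have ht0 : 0 ≤ t := le_of_max_le_left ht
  have hA : A < cosh (c * t * β) := by
    have h1 : 2 * A ≤ c * β * t := (div_le_iff₀' (by positivity)).1 (le_of_max_le_right ht)
    have h2 := add_one_le_exp (c * t * β)
    have h3 := exp_pos (-(c * t * β))
    rw [cosh_eq]
    nlinarith
  calc A * exp (-(c ^ 2 * t) / (2 * D)) < exp (-(c ^ 2 * t) / (2 * D)) * cosh (c * t * β) := by
        rw [mul_comm]
        exact mul_lt_mul_of_pos_left hA (exp_pos _)
    _ ≤ Htilde c D μ t := exp_mul_cosh_le_Htilde hc.le hD.le hμ ht0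

end HyperbolicFactor

section DiracSpectrum

variable {c D μ : ℝ}

theorem Cl_dirac (hμ : 0 ≤ μ) (l : ℕ) (t t' : ℝ) :
    Cl c D (Measure.dirac μ) l t t' =
      2 * π ^ 2 * (besselInt l μ * Htilde c D μ t * Htilde c D μ t') := by
  rw [Cl, setIntegral_dirac, if_pos (mem_Ici.2 hμ)]

theorem Cl_dirac_self (hμ : 0 ≤ μ) (l : ℕ) (t : ℝ) :
    Cl c D (Measure.dirac μ) l t t = Htilde c D μ t ^ 2 * Cl c D (Measure.dirac μ) l 0 0 := by
  rw [Cl_dirac hμ, Cl_dirac hμ, Htilde_zero]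
  ring

theorem two_mul_add_one_mul_Cl_dirac_pos (hμ0 : 0 < μ) (hμ1 : μ ≤ 1) (l : ℕ) :
    0 < (2 * (l : ℝ) + 1) * Cl c D (Measure.dirac μ) l 0 0 := by
  rw [Cl_dirac hμ0.le, Htilde_zero, mul_one, mul_one]
  have := besselInt_pos hμ0 hμ1 l
  positivity

theorem summable_two_mul_add_one_mul_Cl_dirac (hμ0 : 0 < μ) (hμ1 : μ ≤ 1) :
    Summable fun l : ℕ => (2 * (l : ℝ) + 1) * Cl c D (Measure.dirac μ) l 0 0 := by
  refine ((summable_two_mul_add_one_mul_besselInt hμ0 hμ1).mul_left (2 * π ^ 2)).congr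
    fun l => ?_
  rw [Cl_dirac hμ0.le, Htilde_zero]
  ring

end DiracSpectrum

/-- No uniform truncation error bound of the form
`A·exp(−c²t/(2D))·(Σ_{l≥L}(2l+1)C_l)^{1/2}` can hold over all initial spectral
measures: for every `A > 0` and `L` there are `t > 0` and a nonzero finite measure
`G` with `0 < Σ_{l≥L}(2l+1)C_l < ∞` and
`(Σ_{l≥L}(2l+1)C_l(t,t))^{1/2} > A·exp(−c²t/(2D))·(Σ_{l≥L}(2l+1)C_l)^{1/2}`. -/
theorem no_uniform_exponential_truncation_bound
    (c D : ℝ) (hc : 0 < c) (hD : 0 < D) :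
    ∀ A : ℝ, 0 < A → ∀ L : ℕ,
      ∃ t : ℝ, 0 < t ∧
        ∃ G : MeasureTheory.Measure ℝ, MeasureTheory.IsFiniteMeasure G ∧ G ≠ 0 ∧
          G (Set.Iio 0) = 0 ∧
          (Summable fun l : ℕ => (2 * ((L + l : ℕ) : ℝ) + 1) * Cl c D G (L + l) 0 0) ∧
          0 < ∑' l : ℕ, (2 * ((L + l : ℕ) : ℝ) + 1) * Cl c D G (L + l) 0 0 ∧
          Real.sqrt (∑' l : ℕ, (2 * ((L + l : ℕ) : ℝ) + 1) * Cl c D G (L + l) t t)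
            > A * Real.exp (-(c ^ 2 * t) / (2 * D)) *
              Real.sqrt (∑' l : ℕ, (2 * ((L + l : ℕ) : ℝ) + 1) * Cl c D G (L + l) 0 0) := by
  intro A _ L
  -- a single subcritical frequency `μ₀ ≤ 1`, where the Bessel bounds hold
  set μ₀ := min 1 (c / (4 * D))
  have hμ₀ : 0 < μ₀ := lt_min one_pos (by positivity)
  have hμ₀1 : μ₀ ≤ 1 := min_le_left _ _
  have hμ₀c : μ₀ < c / (2 * D) :=
    (min_le_right _ _).trans_lt (div_lt_div_of_pos_left hc (by positivity) (by linarith))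
  obtain ⟨t, hgrow, ht⟩ := ((eventually_mul_exp_lt_Htilde hc hD hμ₀.le hμ₀c A).and
    (Filter.eventually_gt_atTop 0)).exists
  set a : ℕ → ℝ := fun l => (2 * ((L + l : ℕ) : ℝ) + 1) * Cl c D (Measure.dirac μ₀) (L + l) 0 0
  have ha_pos : ∀ l, 0 < a l := fun l => two_mul_add_one_mul_Cl_dirac_pos hμ₀ hμ₀1 (L + l)
  have ha_sum : Summable a := by
    simpa only [add_comm _ L] using
      (summable_nat_add_iff L).2 (summable_two_mul_add_one_mul_Cl_dirac (c := c) (D := D) hμ₀ hμ₀1)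
  have hS : 0 < ∑' l, a l := ha_sum.tsum_pos (fun l => (ha_pos l).le) 0 (ha_pos 0)
  refine ⟨t, ht, Measure.dirac μ₀, inferInstance, Measure.dirac_ne_zero, ?_, ha_sum, hS, ?_⟩
  · rw [Measure.dirac_apply' _ measurableSet_Iio]
    exact indicator_of_notMem (not_lt.2 hμ₀.le) (1 : ℝ → ENNReal)
  · have hterm : ∀ l : ℕ, (2 * ((L + l : ℕ) : ℝ) + 1) * Cl c D (Measure.dirac μ₀) (L + l) t t =
        Htilde c D μ₀ t ^ 2 * a l := fun l => by
      rw [Cl_dirac_self hμ₀.le]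
      ring
    rw [tsum_congr hterm, tsum_mul_left, sqrt_mul (sq_nonneg _), sqrt_sq_eq_abs]
    exact mul_lt_mul_of_pos_right (hgrow.trans_le (le_abs_self _)) (sqrt_pos.2 hS)
end

section
/- Let c, D > 0, let δ ∈ (0, c/(2D)), and set κ = √(1 − 4D²δ²/c²) ∈ (0,1). Then for every t ≥ 0: (i) for every μ with δ ≤ μ < c/(2D), H̃₁(μ,t) ≤ (1 + 1/κ)·exp(−Dδ²t); and (ii) for every μ ≥ c/(2D), |H̃(μ,t)| ≤ (1/κ)·exp(−Dδ²t). -/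
open MeasureTheory Real Set

/-!
Write `x = c²t/(2D)`. For `δ ≤ μ < c/(2D)` the frequency `s = √(c²/(4D²) − μ²)` is at most
`κ c/(2D)`; since `cosh` and `sinh(ct s)/s` increase with `s`, this gives
`H̃₁ ≤ (1 + 1/κ) e^{-(1-κ)x}`. For `μ ≥ c/(2D)`, `|sin y| ≤ |y|` gives `|H̃| ≤ e^{-x}(1 + x)`, and
`1 + x ≤ κ⁻¹ e^{κx}`. Finally `1 - κ ≥ (1 - κ²)/2 = 2D²δ²/c²`, so `e^{-(1-κ)x} ≤ e^{-Dδ²t}`.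
-/

lemma convexOn_sinh : ConvexOn ℝ (Ici 0) sinh :=
  MonotoneOn.convexOn_of_deriv (convex_Ici 0) continuous_sinh.continuousOn
    differentiable_sinh.differentiableOn <| by
      rw [Real.deriv_sinh, interior_Ici]
      intro x hx y hy hxy
      rw [cosh_le_cosh, abs_of_pos hx, abs_of_pos hy]
      exact hxy

lemma sinh_mul_le_mul_sinh {l y : ℝ} (hl0 : 0 ≤ l) (hl1 : l ≤ 1) (hy : 0 ≤ y) :
    sinh (l * y) ≤ l * sinh y := by
  simpa using convexOn_sinh.2 (mem_Ici.2 hy) (mem_Ici.2 le_rfl) hl0 (sub_nonneg.2 hl1)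
    (add_sub_cancel l 1)

lemma sinh_mul_div_le_of_le {τ s b : ℝ} (hτ : 0 ≤ τ) (hs : 0 ≤ s) (hsb : s ≤ b) :
    sinh (τ * s) / s ≤ sinh (τ * b) / b := by
  rcases hs.eq_or_lt with rfl | hs
  · simpa using div_nonneg (sinh_nonneg_iff.2 (mul_nonneg hτ hsb)) hsb
  have hb : 0 < b := hs.trans_le hsb
  calc sinh (τ * s) / s = sinh (s / b * (τ * b)) / s := by field_simp
    _ ≤ s / b * sinh (τ * b) / s := by
      gcongr
      exact sinh_mul_le_mul_sinh (by positivity) ((div_le_one hb).2 hsb) (by positivity)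
    _ = sinh (τ * b) / b := by field_simp

lemma cosh_le_exp_of_nonneg {x : ℝ} (hx : 0 ≤ x) : cosh x ≤ exp x := by
  rw [cosh_eq]
  linarith [exp_le_exp.2 (neg_le_self hx)]

lemma sinh_lt_exp (x : ℝ) : sinh x < exp x := by
  rw [sinh_eq]
  linarith [exp_pos (-x), exp_pos x]

lemma cosh_add_div_mul_sinh_le {a τ s b : ℝ} (ha : 0 ≤ a) (hτ : 0 ≤ τ) (hs : 0 ≤ s)
    (hsb : s ≤ b) : cosh (τ * s) + a / s * sinh (τ * s) ≤ (1 + a / b) * exp (τ * b) := by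
  have hcosh : cosh (τ * s) ≤ exp (τ * b) :=
    (cosh_le_exp_of_nonneg (mul_nonneg hτ hs)).trans (exp_le_exp.2 (by gcongr))
  have hsinh : a / s * sinh (τ * s) ≤ a / b * exp (τ * b) :=
    calc a / s * sinh (τ * s) = a * (sinh (τ * s) / s) := by ring
      _ ≤ a * (sinh (τ * b) / b) := mul_le_mul_of_nonneg_left (sinh_mul_div_le_of_le hτ hs hsb) ha
      _ = a / b * sinh (τ * b) := by ring
      _ ≤ a / b * exp (τ * b) :=
        mul_le_mul_of_nonneg_left (sinh_lt_exp _).le (div_nonneg ha (hs.trans hsb))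
  linarith

lemma abs_cos_add_div_mul_sin_le (a τ s : ℝ) :
    |cos (τ * s) + a / s * sin (τ * s)| ≤ 1 + |a * τ| := by
  have hsin : |a / s| * |sin (τ * s)| ≤ |a * τ| := by
    rcases eq_or_ne s 0 with rfl | hs
    · simp only [div_zero, abs_zero, zero_mul]
      positivity
    calc |a / s| * |sin (τ * s)| ≤ |a / s| * |τ * s| :=
          mul_le_mul_of_nonneg_left abs_sin_le_abs (abs_nonneg _)
      _ = |a * τ| := by rw [← abs_mul]; congr 1; field_simp
  calc |cos (τ * s) + a / s * sin (τ * s)| ≤ |cos (τ * s)| + |a / s| * |sin (τ * s)| := by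
        rw [← abs_mul]; exact abs_add_le _ _
    _ ≤ 1 + |a * τ| := add_le_add (abs_cos_le_one _) hsin

lemma one_add_le_one_div_mul_exp {κ : ℝ} (hκ0 : 0 < κ) (hκ1 : κ ≤ 1) (x : ℝ) :
    1 + x ≤ 1 / κ * exp (κ * x) := by
  rw [one_div, le_inv_mul_iff₀ hκ0, mul_add, mul_one]
  linarith [add_one_le_exp (κ * x)]

lemma neg_add_mul_le_neg_sq_mul {κ ε x : ℝ} (hκ : κ ^ 2 = 1 - ε ^ 2) (hx : 0 ≤ x) :
    -x + κ * x ≤ -(ε ^ 2 * x / 2) := by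
  nlinarith [mul_nonneg hx (sq_nonneg (1 - κ))]

section

variable {c D μ t : ℝ}

lemma Htilde1_le {κ : ℝ} (hc : 0 < c) (hD : 0 < D) (ht : 0 ≤ t) (hκ : 0 < κ)
    (hμ : √(c ^ 2 / (4 * D ^ 2) - μ ^ 2) ≤ c / (2 * D) * κ) :
    Htilde1 c D μ t ≤
      exp (-(c ^ 2 * t) / (2 * D)) * ((1 + 1 / κ) * exp (κ * (c ^ 2 * t / (2 * D)))) := by
  have hbound := cosh_add_div_mul_sinh_le (a := c / (2 * D)) (τ := c * t) (by positivity)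
    (by positivity) (sqrt_nonneg _) hμ
  rw [div_div] at hbound
  rw [Htilde1]
  refine mul_le_mul_of_nonneg_left (hbound.trans_eq ?_) (exp_pos _).le
  congr 1
  · field_simp
  · congr 1; ring

lemma abs_Htilde_le (hc : 0 < c) (hD : 0 < D) (ht : 0 ≤ t) (hμ : c / (2 * D) ≤ μ) :
    |Htilde c D μ t| ≤ exp (-(c ^ 2 * t) / (2 * D)) * (1 + c ^ 2 * t / (2 * D)) := by
  rcases hμ.eq_or_lt with rfl | hlt
  · rw [Htilde, if_neg (lt_irrefl _), if_pos rfl, abs_of_nonneg (by positivity)]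
  have hbound := abs_cos_add_div_mul_sin_le (c / (2 * D)) (c * t)
    √(μ ^ 2 - c ^ 2 / (4 * D ^ 2))
  rw [div_div] at hbound
  rw [Htilde, if_neg hlt.not_gt, if_neg hlt.ne', Htilde2, abs_mul, abs_exp]
  refine mul_le_mul_of_nonneg_left (hbound.trans_eq ?_) (exp_pos _).le
  rw [abs_of_nonneg (by positivity)]
  ring

lemma exp_neg_mul_exp_le {δ κ K : ℝ} (hc : 0 < c) (hD : 0 < D) (ht : 0 ≤ t)
    (hκ : κ ^ 2 = 1 - 4 * D ^ 2 * δ ^ 2 / c ^ 2) (hK : 0 ≤ K) :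
    exp (-(c ^ 2 * t) / (2 * D)) * (K * exp (κ * (c ^ 2 * t / (2 * D)))) ≤
      K * exp (-(D * δ ^ 2 * t)) := by
  rw [mul_left_comm, ← exp_add]
  refine mul_le_mul_of_nonneg_left (exp_le_exp.2 ?_) hK
  convert neg_add_mul_le_neg_sq_mul (ε := 2 * D * δ / c) (x := c ^ 2 * t / (2 * D))
    (by rw [hκ]; ring) (by positivity) using 1
  · ring
  · field_simp

end

/-- For `δ ∈ (0, c/(2D))` and `κ = √(1 − 4D²δ²/c²)`, for all `t ≥ 0`:
(i) `H̃₁(μ,t) ≤ (1 + 1/κ)·exp(−Dδ²t)` for `δ ≤ μ < c/(2D)`;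
(ii) `|H̃(μ,t)| ≤ (1/κ)·exp(−Dδ²t)` for `μ ≥ c/(2D)`. -/
theorem Htilde_exponential_decay_bounds
    (c D δ κ : ℝ) (hc : 0 < c) (hD : 0 < D) (hδ0 : 0 < δ) (hδ : δ < c / (2 * D))
    (hκ : κ = Real.sqrt (1 - 4 * D ^ 2 * δ ^ 2 / c ^ 2)) :
    ∀ t : ℝ, 0 ≤ t →
      (∀ μ : ℝ, δ ≤ μ → μ < c / (2 * D) →
        Htilde1 c D μ t ≤ (1 + 1 / κ) * Real.exp (-(D * δ ^ 2 * t))) ∧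
      (∀ μ : ℝ, c / (2 * D) ≤ μ →
        |Htilde c D μ t| ≤ (1 / κ) * Real.exp (-(D * δ ^ 2 * t))) := by
  intro t ht
  have hε : 4 * D ^ 2 * δ ^ 2 / c ^ 2 < 1 := by
    rw [lt_div_iff₀ (by positivity)] at hδ
    rw [div_lt_one (by positivity)]
    nlinarith [mul_pos (sub_pos.2 hδ) (by positivity : 0 < c + δ * (2 * D))]
  have hκ0 : 0 < κ := hκ ▸ sqrt_pos.2 (sub_pos.2 hε)
  have hκ1 : κ ≤ 1 := hκ ▸ sqrt_le_one.2 (sub_le_self _ (by positivity))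
  have hκsq : κ ^ 2 = 1 - 4 * D ^ 2 * δ ^ 2 / c ^ 2 := hκ ▸ sq_sqrt (sub_pos.2 hε).le
  constructor
  · intro μ hδμ _
    have hs : √(c ^ 2 / (4 * D ^ 2) - μ ^ 2) ≤ c / (2 * D) * κ := by
      rw [sqrt_le_left (by positivity), mul_pow, hκsq]
      have hδμ2 : δ ^ 2 ≤ μ ^ 2 := pow_le_pow_left₀ hδ0.le hδμ 2
      field_simp
      nlinarith [mul_le_mul_of_nonneg_left hδμ2 (sq_nonneg D)]
    exact (Htilde1_le hc hD ht hκ0 hs).trans (exp_neg_mul_exp_le hc hD ht hκsq (by positivity))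
  intro μ hμ
  calc |Htilde c D μ t| ≤ exp (-(c ^ 2 * t) / (2 * D)) * (1 + c ^ 2 * t / (2 * D)) :=
        abs_Htilde_le hc hD ht hμ
    _ ≤ exp (-(c ^ 2 * t) / (2 * D)) * (1 / κ * exp (κ * (c ^ 2 * t / (2 * D)))) := by
        gcongr; exact one_add_le_one_div_mul_exp hκ0 hκ1 _
    _ ≤ 1 / κ * exp (-(D * δ ^ 2 * t)) := exp_neg_mul_exp_le hc hD ht hκsq (by positivity)
end
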